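/- For $q \ge 1$ the class $\widehat{A}_q$ is contained in $A_q^{\mathcal{R}}$: if $w = u (Mh)^{1-q}$ with $u \in A_1$ and $h \in L^1_{loc}(\mathbb{R}^n)$ (with $Mh < \infty$ a.e.), then $w \in A_q^{\mathcal{R}}$ and $[w]_{A_q^{\mathcal{R}}} \lesssim [u]_{A_1}^{1/q}$. -/

import Mathlib

open MeasureTheory ENNReal Set Filter

noncomputable section

/-- The measure with density `w` with respect to the ambient volume. -/
def wMeasure {α : Type*} [MeasureSpace α] (w : α → ℝ) : Measure α :=
  (volume : Measure α).withDensity fun x => ENNReal.ofReal (w x)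

/-- The weak Lorentz `L^{q,∞}(μ)` quasi-norm. -/
def wLorentz {α E : Type*} [MeasurableSpace α] [Norm E] (q : ℝ) (μ : Measure α)
    (g : α → E) : ℝ≥0∞ :=
  ⨆ (t : ℝ) (_ : 0 < t), ENNReal.ofReal t * μ {x | t < ‖g x‖} ^ (1 / q)

/-- The weak Lorentz `L^{q,∞}(μ)` quasi-norm, for `ℝ≥0∞`-valued functions. -/
def wLorentzE {α : Type*} [MeasurableSpace α] (q : ℝ) (μ : Measure α)
    (g : α → ℝ≥0∞) : ℝ≥0∞ :=
  ⨆ (t : ℝ) (_ : 0 < t), ENNReal.ofReal t * μ {x | ENNReal.ofReal t < g x} ^ (1 / q)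

/-- The Lorentz `L^{p,r}(μ)` quasi-norm (computed via the distribution function). -/
def lorentz {α E : Type*} [MeasurableSpace α] [Norm E] (p r : ℝ) (μ : Measure α)
    (g : α → E) : ℝ≥0∞ :=
  (∫⁻ t in Set.Ioi (0 : ℝ), ENNReal.ofReal (t ^ (r - 1)) * μ {x | t < ‖g x‖} ^ (r / p)) ^ (1 / r)

/-- A weight: a locally integrable, a.e. positive function. -/
def IsWeight {α : Type*} [MeasureSpace α] [TopologicalSpace α] (w : α → ℝ) : Prop :=
  LocallyIntegrable w volume ∧ ∀ᵐ x : α ∂volume, 0 < w x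

abbrev Rn (n : ℕ) : Type := Fin n → ℝ

/-- The axis-parallel closed cube with center `c` and half side-length `r`. -/
def cube {n : ℕ} (c : Rn n) (r : ℝ) : Set (Rn n) := {x | ∀ i, |x i - c i| ≤ r}

/-- The Hardy–Littlewood maximal operator over cubes. -/
def maxOp {n : ℕ} (f : Rn n → ℝ) (x : Rn n) : ℝ≥0∞ :=
  ⨆ (c : Rn n) (r : ℝ) (_ : 0 < r) (_ : x ∈ cube c r),
    (∫⁻ y in cube c r, ENNReal.ofReal |f y|) / volume (cube c r)

/-- The `A₁` constant: the least `C` with `Mu ≤ C u` a.e. -/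
def A1Const {n : ℕ} (u : Rn n → ℝ) : ℝ≥0∞ :=
  sInf {C : ℝ≥0∞ | ∀ᵐ x : Rn n ∂volume, maxOp u x ≤ C * ENNReal.ofReal (u x)}

def MemA1 {n : ℕ} (u : Rn n → ℝ) : Prop := IsWeight u ∧ A1Const u < ⊤

/-- The `RH∞` constant `sup_Q (ess sup_Q v) |Q| / v(Q)`. -/
def RHinfConst {n : ℕ} (v : Rn n → ℝ) : ℝ≥0∞ :=
  ⨆ (c : Rn n) (r : ℝ) (_ : 0 < r),
    essSup (fun x => ENNReal.ofReal (v x)) (volume.restrict (cube c r)) * volume (cube c r)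
      / wMeasure v (cube c r)

/-- The Fujii–Wilson `A∞` constant. -/
def FWConst {n : ℕ} (w : Rn n → ℝ) : ℝ≥0∞ :=
  ⨆ (c : Rn n) (r : ℝ) (_ : 0 < r),
    (∫⁻ x in cube c r, maxOp ((cube c r).indicator w) x) / wMeasure w (cube c r)

/-- The Muckenhoupt `A_q` constant, `q > 1`. -/
def AqConst {n : ℕ} (q : ℝ) (w : Rn n → ℝ) : ℝ≥0∞ :=
  ⨆ (c : Rn n) (r : ℝ) (_ : 0 < r),
    (wMeasure w (cube c r) / volume (cube c r)) *
      ((∫⁻ x in cube c r, ENNReal.ofReal (w x ^ (1 - q / (q - 1)))) / volume (cube c r)) ^ (q - 1)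

/-- Membership in `A∞ = ⋃_{q>1} A_q`. -/
def MemAinf {n : ℕ} (w : Rn n → ℝ) : Prop := ∃ q : ℝ, 1 < q ∧ AqConst q w < ⊤

/-- The restricted `A_q^𝓡` constant. -/
def AqRConst {n : ℕ} (q : ℝ) (w : Rn n → ℝ) : ℝ≥0∞ :=
  ⨆ (c : Rn n) (r : ℝ) (_ : 0 < r) (E : Set (Rn n)) (_ : MeasurableSet E)
    (_ : E ⊆ cube c r) (_ : 0 < volume E),
    volume E / volume (cube c r) * (wMeasure w (cube c r) / wMeasure w E) ^ (1 / q)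

/-- The constant `[w]_{RH∞¹} = inf {[u]_{A₁}[v]_{RH∞} : w = uv}`. -/
def RH1Const {n : ℕ} (w : Rn n → ℝ) : ℝ≥0∞ :=
  sInf {C : ℝ≥0∞ | ∃ u v : Rn n → ℝ, (∀ x, w x = u x * v x) ∧ MemA1 u ∧ IsWeight v ∧
    RHinfConst v < ⊤ ∧ C = A1Const u * RHinfConst v}

/-- `S f = (M(|Tf|^{1/2}))²`. -/
def Sop {n : ℕ} (T : (Rn n → ℝ) → Rn n → ℝ) (f : Rn n → ℝ) (x : Rn n) : ℝ≥0∞ :=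
  maxOp (fun y => |T f y| ^ ((2 : ℝ)⁻¹)) x ^ (2 : ℝ)

/-- Condition (C): for some `p₀` and increasing `φ`,
`∫ (Sf)^{p₀} w ≤ φ([w]_{A∞}) ∫ (Mf)^{p₀} w` for all `w ∈ A∞`. -/
def ConditionC {n : ℕ} (T : (Rn n → ℝ) → Rn n → ℝ) : Prop :=
  ∃ p0 : ℝ, 0 < p0 ∧ ∃ φ : ℝ≥0∞ → ℝ≥0∞, Monotone φ ∧
    ∀ w : Rn n → ℝ, IsWeight w → MemAinf w → ∀ f : Rn n → ℝ, Measurable f →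
      (∫⁻ x, Sop T f x ^ p0 * ENNReal.ofReal (w x)) < ⊤ →
      (∫⁻ x, Sop T f x ^ p0 * ENNReal.ofReal (w x)) ≤
        φ (FWConst w) * ∫⁻ x, maxOp f x ^ p0 * ENNReal.ofReal (w x)

/-!
Fix a cube `Q`, a measurable `E ⊆ Q` with `|E| > 0`, and let `β = inf_Q Mh`; it is finite since
`Mh < ∞` a.e., and positive unless `h = 0` a.e. On `Q`, `w = u (Mh)^{1-q} ≤ u β^{1-q}`. Near `Q`,
`Mh ≤ max (M(h 𝟙_{3Q})) (3ⁿ β)`, so the weak type `(1,1)` bound for `M` shows that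
`Mh ≤ s := 2·12ⁿ (|Q|/|E|) β` on a set `A ⊆ E` with `|E| ≤ 2|A|`, and there `w ≥ u s^{1-q}`.
Since `M u ≤ [u]_{A₁} u`, the `A₁` condition gives `u(Q) ≤ [u]_{A₁} (|Q|/|A|) u(A)`. Chaining these,
`w(Q) ≤ 2 (2·12ⁿ)^{q-1} [u]_{A₁} (|Q|/|E|)^q w(E)`, which is the restricted `A_q` inequality.
-/

section

open Metric Topology

variable {n : ℕ}

section Cube

lemma cube_eq_pi (c : Rn n) (r : ℝ) :
    cube c r = Set.pi univ fun i => Icc (c i - r) (c i + r) := by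
  ext x
  simp only [cube, mem_ofPred_eq, mem_univ_pi, mem_Icc, abs_sub_le_iff]
  exact forall_congr' fun i => by constructor <;> rintro ⟨h₁, h₂⟩ <;> constructor <;> linarith

lemma cube_eq_closedBall (c : Rn n) {r : ℝ} (hr : 0 ≤ r) : cube c r = closedBall c r := by
  ext x
  simp only [cube, mem_ofPred_eq, mem_closedBall, dist_pi_le_iff hr, Real.dist_eq]

lemma measurableSet_cube (c : Rn n) (r : ℝ) : MeasurableSet (cube c r) := by
  rw [cube_eq_pi]
  exact MeasurableSet.univ_pi fun _ => measurableSet_Icc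

lemma volume_cube (c : Rn n) (r : ℝ) : volume (cube c r) = ENNReal.ofReal (2 * r) ^ n := by
  have h2r : ∀ i, c i + r - (c i - r) = 2 * r := fun i => by ring
  rw [cube_eq_pi, volume_pi_pi]
  simp only [Real.volume_Icc, h2r, Finset.prod_const, Finset.card_univ, Fintype.card_fin]

lemma volume_cube_pos (c : Rn n) {r : ℝ} (hr : 0 < r) : 0 < volume (cube c r) := by
  rw [volume_cube]
  exact ENNReal.pow_pos (ENNReal.ofReal_pos.2 (by linarith)) n

lemma volume_cube_ne_top (c : Rn n) (r : ℝ) : volume (cube c r) ≠ ⊤ := by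
  rw [volume_cube]
  exact ENNReal.pow_ne_top ENNReal.ofReal_ne_top

lemma volume_cube_mul (c : Rn n) {k : ℝ} (hk : 0 ≤ k) (r : ℝ) :
    volume (cube c (k * r)) = ENNReal.ofReal k ^ n * volume (cube c r) := by
  rw [volume_cube, volume_cube, ← mul_pow, ← ENNReal.ofReal_mul hk, mul_left_comm]

lemma cube_mono (c : Rn n) {r r' : ℝ} (h : r ≤ r') : cube c r ⊆ cube c r' :=
  fun _ hx i => (hx i).trans h

lemma cube_mem_nhds {c x : Rn n} {r r' : ℝ} (hx : x ∈ cube c r) (h : r < r') :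
    cube c r' ∈ 𝓝 x := by
  rw [cube_eq_pi]
  refine set_pi_mem_nhds finite_univ fun i _ => Icc_mem_nhds ?_ ?_ <;>
    linarith [abs_le.1 (hx i)]

lemma cube_subset_cube {c c' : Rn n} {r r' : ℝ} (hr : 0 ≤ r) (h : r + dist c c' ≤ r') :
    cube c r ⊆ cube c' r' := by
  rw [cube_eq_closedBall c hr,
    cube_eq_closedBall c' (hr.trans ((le_add_of_nonneg_right dist_nonneg).trans h))]
  exact closedBall_subset_closedBall' h

lemma cube_subset_cube_three_mul {c c' x : Rn n} {r r' : ℝ} (hx : x ∈ cube c r)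
    (hx' : x ∈ cube c' r') (hr' : 0 ≤ r') (h : r' ≤ r) : cube c' r' ⊆ cube c (3 * r) := by
  rw [cube_eq_closedBall _ hr'] at hx'
  rw [cube_eq_closedBall _ (hr'.trans h)] at hx
  refine cube_subset_cube hr' ?_
  linarith [dist_triangle c' x c, dist_comm x c', mem_closedBall.1 hx, mem_closedBall.1 hx']

end Cube

section MaximalOperator

variable {f : Rn n → ℝ}

lemma le_maxOp {x c : Rn n} {r : ℝ} (hr : 0 < r) (hx : x ∈ cube c r) :
    (∫⁻ y in cube c r, ENNReal.ofReal |f y|) / volume (cube c r) ≤ maxOp f x :=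
  le_iSup₂_of_le c r <| le_iSup₂_of_le (f := fun _ (_ : x ∈ cube c r) => _) hr hx le_rfl

lemma lintegral_cube_le_iInf_maxOp_mul {s : Set (Rn n)} {c : Rn n} {r : ℝ} (hr : 0 < r)
    (hs : s ⊆ cube c r) :
    ∫⁻ y in cube c r, ENNReal.ofReal |f y| ≤ (⨅ x ∈ s, maxOp f x) * volume (cube c r) :=
  (ENNReal.div_le_iff (volume_cube_pos c hr).ne' (volume_cube_ne_top c r)).1 <|
    le_iInf₂ fun _ hx => le_maxOp hr (hs hx)

lemma lintegral_cube_le_maxOp_mul {x c : Rn n} {r : ℝ} (hr : 0 < r) (hx : x ∈ cube c r) :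
    ∫⁻ y in cube c r, ENNReal.ofReal |f y| ≤ maxOp f x * volume (cube c r) := by
  simpa using lintegral_cube_le_iInf_maxOp_mul (f := f) hr (singleton_subset_iff.2 hx)

lemma maxOp_le {x : Rn n} {B : ℝ≥0∞}
    (h : ∀ c r, 0 < r → x ∈ cube c r →
      ∫⁻ y in cube c r, ENNReal.ofReal |f y| ≤ B * volume (cube c r)) :
    maxOp f x ≤ B :=
  iSup₂_le fun c r => iSup₂_le fun hr hx =>
    (ENNReal.div_le_iff (volume_cube_pos c hr).ne' (volume_cube_ne_top c r)).2 (h c r hr hx)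

/-- An average exceeding `t` over a cube survives a small enlargement of the cube, whose
interior is a neighbourhood of every point of the original cube. -/
lemma lowerSemicontinuous_maxOp : LowerSemicontinuous (maxOp f) := by
  intro x t ht
  simp only [maxOp, lt_iSup_iff] at ht
  obtain ⟨c, r, hr, hx, havg⟩ := ht
  have ht_top : t ≠ ⊤ := ne_top_of_lt havg
  rw [ENNReal.lt_div_iff_mul_lt (.inl (volume_cube_pos c hr).ne')
    (.inl (volume_cube_ne_top c r))] at havg
  have hcont : Continuous fun r' : ℝ => t * volume (cube c r') := by
    simp only [volume_cube]
    exact (ENNReal.continuous_const_mul ht_top).comp <| (ENNReal.continuous_pow n).comp <|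
      ENNReal.continuous_ofReal.comp (continuous_const.mul continuous_id)
  obtain ⟨r', hlt, hrr'⟩ := (((hcont.tendsto r).eventually (gt_mem_nhds havg)).filter_mono
    nhdsWithin_le_nhds |>.and (self_mem_nhdsWithin (s := Ioi r))).exists
  filter_upwards [cube_mem_nhds hx hrr'] with y hy
  calc t < (∫⁻ y in cube c r, ENNReal.ofReal |f y|) / volume (cube c r') :=
        (ENNReal.lt_div_iff_mul_lt (.inl (volume_cube_pos c (hr.trans hrr')).ne')
          (.inl (volume_cube_ne_top c r'))).2 hlt
    _ ≤ (∫⁻ y in cube c r', ENNReal.ofReal |f y|) / volume (cube c r') := by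
        gcongr
        exact cube_mono c hrr'.le
    _ ≤ maxOp f y := le_maxOp (hr.trans hrr') hy

lemma measurableSet_lt_maxOp (t : ℝ≥0∞) : MeasurableSet {x | t < maxOp f x} :=
  (lowerSemicontinuous_maxOp.isOpen_preimage t).measurableSet

end MaximalOperator

section WeakType

lemma setOf_lt_maxOp_subset (g : Rn n → ℝ) (t : ℝ≥0∞) :
    {x | t < maxOp g x} ⊆ ⋃ p ∈ {p : Rn n × ℝ | 0 < p.2 ∧
      t * volume (cube p.1 p.2) < ∫⁻ y in cube p.1 p.2, ENNReal.ofReal |g y|}, cube p.1 p.2 := by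
  intro x hx
  simp only [mem_ofPred_eq, maxOp, lt_iSup_iff] at hx
  obtain ⟨c, r, hr, hx, havg⟩ := hx
  rw [ENNReal.lt_div_iff_mul_lt (.inl (volume_cube_pos c hr).ne')
    (.inl (volume_cube_ne_top c r))] at havg
  exact mem_biUnion (x := (c, r)) ⟨hr, havg⟩ hx

lemma exists_radius_le_of_mul_volume_cube_le (hn : n ≠ 0) {t I : ℝ≥0∞} (ht : t ≠ 0)
    (hI : I ≠ ⊤) : ∃ R : ℝ, ∀ (c : Rn n) (r : ℝ), 0 < r → t * volume (cube c r) ≤ I → r ≤ R := by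
  have hmax : max 1 (I / t) ≠ ⊤ := max_ne_top ENNReal.one_ne_top (ENNReal.div_ne_top hI ht)
  refine ⟨(max 1 (I / t)).toReal, fun c r hr hcube => ?_⟩
  have hvol : ENNReal.ofReal (2 * r) ^ n ≤ I / t := by
    rw [ENNReal.le_div_iff_mul_le (.inl ht) (.inr hI), mul_comm, ← volume_cube c r]
    exact hcube
  have h2r : ENNReal.ofReal (2 * r) ≤ max 1 (I / t) := by
    rcases le_total (ENNReal.ofReal (2 * r)) 1 with h | h
    · exact le_max_of_le_left h
    · exact le_max_of_le_right ((le_self_pow₀ h hn).trans hvol)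
  linarith [(ENNReal.ofReal_le_iff_le_toReal hmax).1 h2r]

lemma exists_disjoint_subfamily_covering_enlargement_cube (T : Set (Rn n × ℝ))
    (hT : ∀ p ∈ T, 0 < p.2) {R : ℝ} (hR : ∀ p ∈ T, p.2 ≤ R) :
    ∃ U ⊆ T, U.Countable ∧ U.PairwiseDisjoint (fun p => cube p.1 p.2) ∧
      ⋃ p ∈ T, cube p.1 p.2 ⊆ ⋃ p ∈ U, cube p.1 (4 * p.2) := by
  obtain ⟨U, hUT, hUdisj, hUcov⟩ :=
    Vitali.exists_disjoint_subfamily_covering_enlargement_closedBall T Prod.fst Prod.snd R hR 4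
      (by norm_num)
  refine ⟨U, hUT, hUdisj.countable_of_nonempty_interior fun p hp =>
    (nonempty_ball.2 (hT p (hUT hp))).mono ball_subset_interior_closedBall,
    fun p hp p' hp' hne => ?_, iUnion₂_subset fun p hp => ?_⟩
  · simpa only [Function.onFun, cube_eq_closedBall _ (hT p (hUT hp)).le,
      cube_eq_closedBall _ (hT p' (hUT hp')).le] using hUdisj hp hp' hne
  · obtain ⟨p', hp'U, hsub⟩ := hUcov p hp
    rw [cube_eq_closedBall _ (hT p hp).le]
    refine hsub.trans ?_
    rw [← cube_eq_closedBall _ (by linarith [hT p' (hUT hp'U)])]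
    exact subset_biUnion_of_mem (u := fun p : Rn n × ℝ => cube p.1 (4 * p.2)) hp'U

/-- Weak type `(1,1)` of `M`; the constant `4ⁿ` comes from the enlargement factor `4` in the Vitali
covering lemma. -/
lemma mul_volume_lt_maxOp_le (g : Rn n → ℝ) (t : ℝ≥0∞) :
    t * volume {x | t < maxOp g x} ≤ 4 ^ n * ∫⁻ y, ENNReal.ofReal |g y| := by
  set I := ∫⁻ y, ENNReal.ofReal |g y|
  set ν := volume.withDensity fun y => ENNReal.ofReal |g y|
  have hν : ∀ s, MeasurableSet s → ν s = ∫⁻ y in s, ENNReal.ofReal |g y| :=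
    fun s hs => withDensity_apply _ hs
  have hνI : ∀ s, ν s ≤ I := fun s =>
    (measure_mono (subset_univ s)).trans (by rw [hν _ .univ, Measure.restrict_univ])
  set T := {p : Rn n × ℝ | 0 < p.2 ∧
    t * volume (cube p.1 p.2) < ∫⁻ y in cube p.1 p.2, ENNReal.ofReal |g y|}
  have hTI : ∀ p ∈ T, t * volume (cube p.1 p.2) ≤ I := fun p hp =>
    hp.2.le.trans (by rw [← hν _ (measurableSet_cube _ _)]; exact hνI _)
  have hcover := setOf_lt_maxOp_subset g t
  rcases eq_or_ne n 0 with rfl | hn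
  · rcases eq_empty_or_nonempty {x | t < maxOp g x} with he | ⟨x, hx⟩
    · simp [he]
    obtain ⟨p, hpT, -⟩ := mem_iUnion₂.1 (hcover hx)
    calc t * volume {x | t < maxOp g x} ≤ t * volume (cube p.1 p.2) :=
          mul_le_mul_right (measure_mono fun _ _ i => i.elim0) t
      _ ≤ 4 ^ 0 * I := by rw [pow_zero, one_mul]; exact hTI p hpT
  rcases eq_or_ne t 0 with rfl | ht
  · simp
  rcases eq_or_ne I ⊤ with hI | hI
  · simp [hI, ENNReal.mul_top (pow_ne_zero n (four_ne_zero))]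
  obtain ⟨R, hR⟩ := exists_radius_le_of_mul_volume_cube_le hn ht hI
  obtain ⟨U, hUT, hUcount, hUdisj, hUcov⟩ := exists_disjoint_subfamily_covering_enlargement_cube T
    (fun p hp => hp.1) (fun p hp => hR p.1 p.2 hp.1 (hTI p hp))
  calc t * volume {x | t < maxOp g x}
      ≤ t * ∑' p : U, volume (cube p.1.1 (4 * p.1.2)) := by
        gcongr
        exact (measure_mono (hcover.trans hUcov)).trans (measure_biUnion_le _ hUcount _)
    _ = ∑' p : U, 4 ^ n * (t * volume (cube p.1.1 p.1.2)) := by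
        rw [← ENNReal.tsum_mul_left]
        congr 1 with p
        rw [volume_cube_mul _ (by norm_num : (0 : ℝ) ≤ 4), ENNReal.ofReal_ofNat]
        ring
    _ ≤ ∑' p : U, 4 ^ n * ν (cube p.1.1 p.1.2) := by
        gcongr with p
        rw [hν _ (measurableSet_cube _ _)]
        exact (hUT p.2).2.le
    _ = 4 ^ n * ν (⋃ p ∈ U, cube p.1 p.2) := by
        rw [ENNReal.tsum_mul_left,
          measure_biUnion hUcount hUdisj fun p _ => measurableSet_cube p.1 p.2]
    _ ≤ 4 ^ n * I := by gcongr; exact hνI _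

end WeakType

section Localization

variable {h : Rn n → ℝ} {c : Rn n} {r : ℝ}

/-- Cubes through `x ∈ Q` no larger than `Q` lie in `3Q`; a larger one `Q'` has `Q ⊆ 3Q'`, so its
average is at most `3ⁿ inf_Q Mh`. -/
lemma maxOp_le_max_maxOp_indicator {x : Rn n} (hr : 0 < r) (hx : x ∈ cube c r) :
    maxOp h x ≤
      max (maxOp ((cube c (3 * r)).indicator h) x) (3 ^ n * ⨅ y ∈ cube c r, maxOp h y) := by
  refine maxOp_le fun c' r' hr' hx' => ?_
  rcases le_or_gt r' r with hle | hlt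
  · have hsub := cube_subset_cube_three_mul hx hx' hr'.le hle
    calc ∫⁻ y in cube c' r', ENNReal.ofReal |h y|
        = ∫⁻ y in cube c' r', ENNReal.ofReal |(cube c (3 * r)).indicator h y| :=
          setLIntegral_congr_fun (measurableSet_cube c' r') fun y hy => by
            rw [indicator_of_mem (hsub hy)]
      _ ≤ maxOp ((cube c (3 * r)).indicator h) x * volume (cube c' r') :=
          lintegral_cube_le_maxOp_mul hr' hx'
      _ ≤ _ := by gcongr; exact le_max_left _ _
  · have hsub := cube_subset_cube_three_mul hx' hx hr.le hlt.le
    calc ∫⁻ y in cube c' r', ENNReal.ofReal |h y|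
        ≤ ∫⁻ y in cube c' (3 * r'), ENNReal.ofReal |h y| :=
          lintegral_mono_set (cube_mono c' (by linarith))
      _ ≤ (⨅ y ∈ cube c r, maxOp h y) * volume (cube c' (3 * r')) :=
          lintegral_cube_le_iInf_maxOp_mul (by linarith) hsub
      _ = 3 ^ n * (⨅ y ∈ cube c r, maxOp h y) * volume (cube c' r') := by
          rw [volume_cube_mul _ (by norm_num : (0 : ℝ) ≤ 3), ENNReal.ofReal_ofNat]
          ring
      _ ≤ _ := by gcongr; exact le_max_right _ _

lemma mul_volume_cube_inter_lt_maxOp_le (hr : 0 < r) {t : ℝ≥0∞}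
    (ht : 3 ^ n * (⨅ y ∈ cube c r, maxOp h y) ≤ t) :
    t * volume (cube c r ∩ {x | t < maxOp h x}) ≤
      12 ^ n * (⨅ y ∈ cube c r, maxOp h y) * volume (cube c r) := by
  set β := ⨅ y ∈ cube c r, maxOp h y
  set G := (cube c (3 * r)).indicator h
  have hsub : cube c r ∩ {x | t < maxOp h x} ⊆ {x | t < maxOp G x} := by
    rintro x ⟨hxQ, hxt⟩
    rcases lt_max_iff.1 (hxt.trans_le (maxOp_le_max_maxOp_indicator hr hxQ)) with hG | hβ
    · exact hG
    · exact absurd (hβ.trans_le ht) (lt_irrefl t)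
  have hG : ∫⁻ y, ENNReal.ofReal |G y| = ∫⁻ y in cube c (3 * r), ENNReal.ofReal |h y| := by
    rw [← lintegral_indicator (measurableSet_cube _ _)]
    congr 1 with y
    by_cases hy : y ∈ cube c (3 * r) <;> simp [G, hy]
  calc t * volume (cube c r ∩ {x | t < maxOp h x})
      ≤ t * volume {x | t < maxOp G x} := by gcongr
    _ ≤ 4 ^ n * ∫⁻ y in cube c (3 * r), ENNReal.ofReal |h y| :=
        hG ▸ mul_volume_lt_maxOp_le G t
    _ ≤ 4 ^ n * (β * volume (cube c (3 * r))) := by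
        gcongr
        exact lintegral_cube_le_iInf_maxOp_mul (by linarith) (cube_mono c (by linarith))
    _ = 12 ^ n * β * volume (cube c r) := by
        rw [volume_cube_mul _ (by norm_num : (0 : ℝ) ≤ 3), ENNReal.ofReal_ofNat,
          show (12 : ℝ≥0∞) = 4 * 3 by norm_num, mul_pow]
        ring

lemma iInf_maxOp_cube_ne_zero {c₀ : Rn n} {r₀ : ℝ}
    (h₀ : ∫⁻ y in cube c₀ r₀, ENNReal.ofReal |h y| ≠ 0) (c : Rn n) (r : ℝ) :
    ⨅ y ∈ cube c r, maxOp h y ≠ 0 := by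
  set R := |r| + |r₀| + dist c₀ c + 1
  have hR : 0 < R := by positivity
  have h₀R : cube c₀ r₀ ⊆ cube c R :=
    (cube_mono c₀ (le_abs_self r₀)).trans (cube_subset_cube (abs_nonneg r₀) (by
      linarith [abs_nonneg r]))
  have hQR : cube c r ⊆ cube c R :=
    cube_mono c (by linarith [le_abs_self r, abs_nonneg r₀, dist_nonneg (x := c₀) (y := c)])
  intro hβ
  refine h₀ (nonpos_iff_eq_zero.1 ?_)
  calc ∫⁻ y in cube c₀ r₀, ENNReal.ofReal |h y|
      ≤ ∫⁻ y in cube c R, ENNReal.ofReal |h y| := lintegral_mono_set h₀R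
    _ ≤ (⨅ y ∈ cube c r, maxOp h y) * volume (cube c R) :=
        lintegral_cube_le_iInf_maxOp_mul hR hQR
    _ = 0 := by rw [hβ, zero_mul]

lemma iInf_maxOp_cube_ne_top (hMh : ∀ᵐ x, maxOp h x < ⊤) (hr : 0 < r) :
    ⨅ y ∈ cube c r, maxOp h y ≠ ⊤ := by
  have : (ae (volume.restrict (cube c r))).NeBot :=
    ae_neBot.2 (Measure.restrict_eq_zero.not.2 (volume_cube_pos c hr).ne')
  obtain ⟨x, hxQ, hx⟩ := ((ae_restrict_mem (measurableSet_cube c r)).and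
    (ae_restrict_of_ae hMh)).exists
  exact ((iInf₂_le x hxQ).trans_lt hx).ne

end Localization

section Weight

variable {α : Type*} [MeasureSpace α] {u : α → ℝ} {M : α → ℝ≥0∞} {q : ℝ}

lemma ENNReal.ofReal_mul_toReal_rpow_mul_rpow (a q : ℝ) {m : ℝ≥0∞} (h0 : m ≠ 0) (htop : m ≠ ⊤) :
    ENNReal.ofReal (a * m.toReal ^ (1 - q)) * m ^ (q - 1) = ENNReal.ofReal a := by
  have hm : 0 < m.toReal := ENNReal.toReal_pos h0 htop
  have hpow : m ^ (q - 1) = ENNReal.ofReal (m.toReal ^ (q - 1)) := by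
    rw [← ENNReal.ofReal_rpow_of_pos hm, ENNReal.ofReal_toReal htop]
  rw [hpow, ← ENNReal.ofReal_mul' (Real.rpow_nonneg hm.le _), mul_assoc, ← Real.rpow_add hm]
  norm_num

lemma ENNReal.div_le_two_mul_div (a : ℝ≥0∞) {b c : ℝ≥0∞} (h : b ≤ 2 * c) :
    a / c ≤ 2 * (a / b) :=
  calc a / c ≤ a / (b / 2) := ENNReal.div_le_div_left (ENNReal.div_le_of_le_mul' h) _
    _ = 2 * (a / b) := by
      rw [div_eq_mul_inv, ENNReal.inv_div (.inl ENNReal.ofNat_ne_top) (.inl two_ne_zero),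
        div_eq_mul_inv, div_eq_mul_inv]
      ring

lemma ENNReal.mul_mul_rpow_sub_one_mul (a f b : ℝ≥0∞) (hq : 1 ≤ q) :
    (a * f * b) ^ (q - 1) * f = a ^ (q - 1) * b ^ (q - 1) * f ^ q := by
  have hq' : 0 ≤ q - 1 := by linarith
  have hf : f ^ q = f ^ (q - 1) * f := by
    simpa using ENNReal.rpow_add_of_nonneg (x := f) (q - 1) 1 hq' zero_le_one
  rw [ENNReal.mul_rpow_of_nonneg _ _ hq', ENNReal.mul_rpow_of_nonneg _ _ hq', hf]
  ring

variable {S : Set α}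

lemma rpow_mul_wMeasure_le_setLIntegral (hq : 1 ≤ q) (hM : ∀ᵐ x, M x ≠ ⊤) (hS : MeasurableSet S)
    {b : ℝ≥0∞} (hb0 : b ≠ 0) (hbtop : b ≠ ⊤) (hbM : ∀ x ∈ S, b ≤ M x) :
    b ^ (q - 1) * wMeasure (fun x => u x * (M x).toReal ^ (1 - q)) S ≤
      ∫⁻ x in S, ENNReal.ofReal (u x) := by
  rw [wMeasure, withDensity_apply _ hS,
    ← lintegral_const_mul' _ _ (ENNReal.rpow_ne_top_of_nonneg (by linarith) hbtop)]
  refine lintegral_mono_ae ?_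
  filter_upwards [ae_restrict_mem hS, ae_restrict_of_ae hM] with x hxS hx
  rw [← ENNReal.ofReal_mul_toReal_rpow_mul_rpow (u x) q
    ((pos_iff_ne_zero.2 hb0).trans_le (hbM x hxS)).ne' hx, mul_comm]
  gcongr
  exact hbM x hxS

lemma setLIntegral_le_rpow_mul_wMeasure (hq : 1 ≤ q) (hM : ∀ᵐ x, M x ≠ ⊤)
    (hS : MeasurableSet S) {s : ℝ≥0∞} (hstop : s ≠ ⊤) (hM0 : ∀ x ∈ S, M x ≠ 0)
    (hMs : ∀ x ∈ S, M x ≤ s) :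
    ∫⁻ x in S, ENNReal.ofReal (u x) ≤
      s ^ (q - 1) * wMeasure (fun x => u x * (M x).toReal ^ (1 - q)) S := by
  rw [wMeasure, withDensity_apply _ hS,
    ← lintegral_const_mul' _ _ (ENNReal.rpow_ne_top_of_nonneg (by linarith) hstop)]
  refine lintegral_mono_ae ?_
  filter_upwards [ae_restrict_mem hS, ae_restrict_of_ae hM] with x hxS hx
  rw [← ENNReal.ofReal_mul_toReal_rpow_mul_rpow (u x) q (hM0 x hxS) hx, mul_comm]
  gcongr
  exact hMs x hxS

end Weight

lemma setLIntegral_cube_le_of_maxOp_le {u : Rn n → ℝ} {K : ℝ≥0∞} (hu : ∀ᵐ x, 0 ≤ u x)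
    (hK : ∀ᵐ x, maxOp u x ≤ K * ENNReal.ofReal (u x)) (hKtop : K ≠ ⊤) {c : Rn n} {r : ℝ}
    (hr : 0 < r) {A : Set (Rn n)} (hA : MeasurableSet A) (hAQ : A ⊆ cube c r)
    (hA0 : volume A ≠ 0) :
    ∫⁻ y in cube c r, ENNReal.ofReal (u y) ≤
      K * (volume (cube c r) / volume A) * ∫⁻ y in A, ENNReal.ofReal (u y) := by
  set uQ := ∫⁻ y in cube c r, ENNReal.ofReal (u y)
  have hA_top : volume A ≠ ⊤ := ne_top_of_le_ne_top (volume_cube_ne_top c r) (measure_mono hAQ)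
  have habs : ∫⁻ y in cube c r, ENNReal.ofReal |u y| = uQ :=
    lintegral_congr_ae (ae_restrict_of_ae (hu.mono fun y hy => by simp only [abs_of_nonneg hy]))
  have havg : volume A * (uQ / volume (cube c r)) ≤ K * ∫⁻ y in A, ENNReal.ofReal (u y) :=
    calc volume A * (uQ / volume (cube c r)) = ∫⁻ _ in A, uQ / volume (cube c r) := by
          rw [setLIntegral_const, mul_comm]
      _ ≤ ∫⁻ y in A, K * ENNReal.ofReal (u y) := by
          refine lintegral_mono_ae ?_
          filter_upwards [ae_restrict_mem hA, ae_restrict_of_ae hK] with y hyA hy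
          exact (habs ▸ le_maxOp hr (hAQ hyA)).trans hy
      _ = K * ∫⁻ y in A, ENNReal.ofReal (u y) := lintegral_const_mul' _ _ hKtop
  calc uQ = volume (cube c r) / volume A * (volume A * (uQ / volume (cube c r))) := by
        rw [← mul_assoc, ENNReal.div_mul_cancel hA0 hA_top,
          ENNReal.mul_div_cancel (volume_cube_pos c hr).ne' (volume_cube_ne_top c r)]
    _ ≤ volume (cube c r) / volume A * (K * ∫⁻ y in A, ENNReal.ofReal (u y)) := by gcongr
    _ = K * (volume (cube c r) / volume A) * ∫⁻ y in A, ENNReal.ofReal (u y) := by ring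

section RestrictedWeight

variable {q : ℝ} {u h : Rn n → ℝ} {K : ℝ≥0∞} {c : Rn n} {r : ℝ} {E : Set (Rn n)}

/-- The threshold `s = 2·12ⁿ (|Q|/|E|) β` makes the localized weak type bound
`s |Q ∩ {Mh > s}| ≤ 12ⁿ β |Q|` equal to `|E| / 2`. -/
lemma volume_le_two_mul_volume_diff (hr : 0 < r) (hEQ : E ⊆ cube c r) (hE0 : volume E ≠ 0)
    (hβ0 : ⨅ y ∈ cube c r, maxOp h y ≠ 0) (hβtop : ⨅ y ∈ cube c r, maxOp h y ≠ ⊤) :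
    volume E ≤ 2 * volume (E \ {x | 2 * 12 ^ n * (volume (cube c r) / volume E) *
      (⨅ y ∈ cube c r, maxOp h y) < maxOp h x}) := by
  set β := ⨅ y ∈ cube c r, maxOp h y
  set f := volume (cube c r) / volume E
  set O := {x | 2 * 12 ^ n * f * β < maxOp h x}
  have hEtop : volume E ≠ ⊤ := ne_top_of_le_ne_top (volume_cube_ne_top c r) (measure_mono hEQ)
  have hf1 : 1 ≤ f := (ENNReal.le_div_iff_mul_le (.inl hE0) (.inl hEtop)).2 <| by
    rw [one_mul]; exact measure_mono hEQ
  have hf_top : f ≠ ⊤ := ENNReal.div_ne_top (volume_cube_ne_top c r) hE0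
  have hQ : volume (cube c r) = f * volume E := (ENNReal.div_mul_cancel hE0 hEtop).symm
  have ha0 : 12 ^ n * f * β ≠ 0 :=
    mul_ne_zero (mul_ne_zero (pow_ne_zero _ (by norm_num)) (one_pos.trans_le hf1).ne') hβ0
  have hatop : 12 ^ n * f * β ≠ ⊤ := by finiteness
  have h3 : 3 ^ n * β ≤ 2 * 12 ^ n * f * β := by
    gcongr
    calc (3 : ℝ≥0∞) ^ n ≤ 1 * 12 ^ n * 1 := by rw [one_mul, mul_one]; gcongr; norm_num
      _ ≤ 2 * 12 ^ n * f := by gcongr; norm_num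
  have hEO : 2 * volume (E ∩ O) ≤ volume E := by
    refine (ENNReal.mul_le_mul_iff_right ha0 hatop).1 ?_
    calc 12 ^ n * f * β * (2 * volume (E ∩ O)) = 2 * 12 ^ n * f * β * volume (E ∩ O) := by ring
      _ ≤ 2 * 12 ^ n * f * β * volume (cube c r ∩ O) := by gcongr
      _ ≤ 12 ^ n * β * volume (cube c r) := mul_volume_cube_inter_lt_maxOp_le hr h3
      _ = 12 ^ n * f * β * volume E := by rw [hQ]; ring
  refine ENNReal.le_of_add_le_add_left hEtop ?_
  calc volume E + volume E = 2 * volume (E ∩ O) + 2 * volume (E \ O) := by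
        rw [← mul_add, measure_inter_add_sdiff E (measurableSet_lt_maxOp _), two_mul]
    _ ≤ volume E + 2 * volume (E \ O) := by gcongr

lemma wMeasure_cube_le_of_iInf_ne_zero (hq : 1 ≤ q) (hu : ∀ᵐ x, 0 ≤ u x)
    (hK : ∀ᵐ x, maxOp u x ≤ K * ENNReal.ofReal (u x)) (hKtop : K ≠ ⊤)
    (hMh : ∀ᵐ x, maxOp h x < ⊤) (hr : 0 < r) (hE : MeasurableSet E) (hEQ : E ⊆ cube c r)
    (hE0 : volume E ≠ 0) (hβ0 : ⨅ y ∈ cube c r, maxOp h y ≠ 0) :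
    wMeasure (fun x => u x * (maxOp h x).toReal ^ (1 - q)) (cube c r) ≤
      2 * (2 * 12 ^ n) ^ (q - 1) * K * (volume (cube c r) / volume E) ^ q *
        wMeasure (fun x => u x * (maxOp h x).toReal ^ (1 - q)) E := by
  set w := fun x => u x * (maxOp h x).toReal ^ (1 - q)
  set β := ⨅ y ∈ cube c r, maxOp h y
  set f := volume (cube c r) / volume E
  set s := 2 * 12 ^ n * f * β
  set A := E \ {x | s < maxOp h x}
  have hβtop : β ≠ ⊤ := iInf_maxOp_cube_ne_top hMh hr
  have hf_top : f ≠ ⊤ := ENNReal.div_ne_top (volume_cube_ne_top c r) hE0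
  have hs_top : s ≠ ⊤ := by finiteness
  have hA : MeasurableSet A := hE.diff (measurableSet_lt_maxOp s)
  have hAQ : A ⊆ cube c r := sdiff_subset.trans hEQ
  have hβM : ∀ x ∈ cube c r, β ≤ maxOp h x := fun x hx => iInf₂_le x hx
  have hMh' : ∀ᵐ x, maxOp h x ≠ ⊤ := hMh.mono fun _ hx => hx.ne
  have hEA : volume E ≤ 2 * volume A := volume_le_two_mul_volume_diff hr hEQ hE0 hβ0 hβtop
  have hA0 : volume A ≠ 0 := fun h0 => hE0 (nonpos_iff_eq_zero.1 (by simpa [h0] using hEA))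
  have hAs : ∫⁻ x in A, ENNReal.ofReal (u x) ≤ s ^ (q - 1) * wMeasure w A :=
    setLIntegral_le_rpow_mul_wMeasure hq hMh' hA hs_top
      (fun x hx => ((pos_iff_ne_zero.2 hβ0).trans_le (hβM x (hAQ hx))).ne')
      (fun x hx => not_lt.1 hx.2)
  refine (ENNReal.mul_le_mul_iff_right (ENNReal.rpow_pos (pos_iff_ne_zero.2 hβ0) hβtop).ne'
    (ENNReal.rpow_ne_top_of_nonneg (by linarith : 0 ≤ q - 1) hβtop)).1 ?_
  calc β ^ (q - 1) * wMeasure w (cube c r)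
      ≤ ∫⁻ x in cube c r, ENNReal.ofReal (u x) :=
        rpow_mul_wMeasure_le_setLIntegral hq hMh' (measurableSet_cube c r) hβ0 hβtop hβM
    _ ≤ K * (volume (cube c r) / volume A) * ∫⁻ x in A, ENNReal.ofReal (u x) :=
        setLIntegral_cube_le_of_maxOp_le hu hK hKtop hr hA hAQ hA0
    _ ≤ K * (2 * f) * (s ^ (q - 1) * wMeasure w E) := by
        gcongr
        · exact ENNReal.div_le_two_mul_div _ hEA
        · exact hAs.trans (by gcongr; exact sdiff_subset)
    _ = β ^ (q - 1) * (2 * (2 * 12 ^ n) ^ (q - 1) * K * f ^ q * wMeasure w E) := by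
        rw [show β ^ (q - 1) * (2 * (2 * 12 ^ n) ^ (q - 1) * K * f ^ q * wMeasure w E) =
          2 * K * wMeasure w E * ((2 * 12 ^ n) ^ (q - 1) * β ^ (q - 1) * f ^ q) by ring,
          ← ENNReal.mul_mul_rpow_sub_one_mul _ _ _ hq]
        ring

lemma wMeasure_cube_le (hq : 1 ≤ q) (hu : ∀ᵐ x, 0 ≤ u x)
    (hK : ∀ᵐ x, maxOp u x ≤ K * ENNReal.ofReal (u x)) (hKtop : K ≠ ⊤)
    (hMh : ∀ᵐ x, maxOp h x < ⊤) (hr : 0 < r) (hE : MeasurableSet E) (hEQ : E ⊆ cube c r)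
    (hE0 : volume E ≠ 0) :
    wMeasure (fun x => u x * (maxOp h x).toReal ^ (1 - q)) (cube c r) ≤
      2 * (2 * 12 ^ n) ^ (q - 1) * K * (volume (cube c r) / volume E) ^ q *
        wMeasure (fun x => u x * (maxOp h x).toReal ^ (1 - q)) E := by
  by_cases hnull : ∀ c' r', ∫⁻ y in cube c' r', ENNReal.ofReal |h y| = 0
  · rcases hq.eq_or_lt with rfl | hq1
    · simp only [sub_self, Real.rpow_zero, mul_one, ENNReal.rpow_zero, ENNReal.rpow_one]
      rw [wMeasure, withDensity_apply _ (measurableSet_cube c r), withDensity_apply _ hE]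
      refine (setLIntegral_cube_le_of_maxOp_le hu hK hKtop hr hE hEQ hE0).trans ?_
      gcongr
      exact le_mul_of_one_le_left (by positivity) one_le_two
    · -- `Mh ≡ 0`, and `Real.rpow` gives `0 ^ (1 - q) = 0` for `q > 1`, so the weight vanishes.
      have hM : ∀ x, maxOp h x = 0 := fun x =>
        nonpos_iff_eq_zero.1 (maxOp_le fun c' r' _ _ => by rw [hnull c' r', zero_mul])
      simp [hM, Real.zero_rpow (by linarith : 1 - q ≠ 0), wMeasure]
  · push Not at hnull
    obtain ⟨c₀, r₀, h₀⟩ := hnull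
    exact wMeasure_cube_le_of_iInf_ne_zero hq hu hK hKtop hMh hr hE hEQ hE0
      (iInf_maxOp_cube_ne_zero h₀ c r)

end RestrictedWeight

lemma AqRConst_le_of_forall {q : ℝ} (hq : 0 < q) {w : Rn n → ℝ} {B : ℝ≥0∞}
    (h : ∀ (c : Rn n) (r : ℝ), 0 < r → ∀ E, MeasurableSet E → E ⊆ cube c r → volume E ≠ 0 →
      wMeasure w (cube c r) ≤ B * (volume (cube c r) / volume E) ^ q * wMeasure w E) :
    AqRConst q w ≤ B ^ (1 / q) := by
  refine iSup₂_le fun c r => iSup₂_le fun hr E => iSup₂_le fun hE hEQ => iSup_le fun hE0 => ?_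
  set f := volume (cube c r) / volume E
  have hEtop : volume E ≠ ⊤ := ne_top_of_le_ne_top (volume_cube_ne_top c r) (measure_mono hEQ)
  have hf0 : f ≠ 0 := by simp [f, (volume_cube_pos c hr).ne', hEtop]
  have hf_top : f ≠ ⊤ := ENNReal.div_ne_top (volume_cube_ne_top c r) hE0.ne'
  calc volume E / volume (cube c r) * (wMeasure w (cube c r) / wMeasure w E) ^ (1 / q)
      ≤ f⁻¹ * (B * f ^ q) ^ (1 / q) := by
        rw [ENNReal.inv_div (.inr (volume_cube_ne_top c r)) (.inr (volume_cube_pos c hr).ne')]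
        gcongr
        exact ENNReal.div_le_of_le_mul (h c r hr E hE hEQ hE0.ne')
    _ = B ^ (1 / q) := by
        rw [ENNReal.mul_rpow_of_nonneg _ _ (by positivity), ← ENNReal.rpow_mul,
          mul_one_div_cancel hq.ne', ENNReal.rpow_one, mul_left_comm,
          ENNReal.inv_mul_cancel hf0 hf_top, mul_one]

lemma ae_maxOp_le_A1Const {u : Rn n → ℝ} (hu : A1Const u < ⊤) :
    ∀ᵐ x, maxOp u x ≤ A1Const u * ENNReal.ofReal (u x) := by
  set S := {C : ℝ≥0∞ | ∀ᵐ x : Rn n ∂volume, maxOp u x ≤ C * ENNReal.ofReal (u x)}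
  have hS : S.Nonempty := by
    by_contra he
    exact hu.ne (by rw [not_nonempty_iff_eq_empty] at he; exact (congrArg sInf he).trans sInf_empty)
  obtain ⟨C, -, hC, hCS⟩ := exists_seq_tendsto_sInf hS (OrderBot.bddBelow S)
  filter_upwards [ae_all_iff.2 hCS] with x hx
  exact ge_of_tendsto' (ENNReal.Tendsto.mul_const hC (.inr ENNReal.ofReal_ne_top)) hx

end

/-- `Â_q ⊆ A_q^𝓡`: if `w = u (Mh)^{1-q}` with `u ∈ A₁` and `h ∈ L¹_loc` with `Mh < ∞` a.e.,
then `w ∈ A_q^𝓡` with `[w]_{A_q^𝓡} ≲ [u]_{A₁}^{1/q}`. -/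
theorem stmt4 (n : ℕ) (q : ℝ) (hq : 1 ≤ q) :
    ∃ C : ℝ≥0∞, C < ⊤ ∧ ∀ u h : Rn n → ℝ, MemA1 u → LocallyIntegrable h volume →
      (∀ᵐ x : Rn n ∂volume, maxOp h x < ⊤) →
      AqRConst q (fun x => u x * (maxOp h x).toReal ^ (1 - q)) < ⊤ ∧
      AqRConst q (fun x => u x * (maxOp h x).toReal ^ (1 - q)) ≤ C * A1Const u ^ (1 / q) := by
  set C : ℝ≥0∞ := (2 * (2 * 12 ^ n) ^ (q - 1)) ^ (1 / q)
  have hC : C < ⊤ := ENNReal.rpow_lt_top_of_nonneg (by positivity) <|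
    ENNReal.mul_ne_top ENNReal.ofNat_ne_top
      (ENNReal.rpow_ne_top_of_nonneg (by linarith) (by finiteness))
  refine ⟨C, hC, fun u h ⟨⟨_, hu_pos⟩, hA1⟩ _ hMh => ?_⟩
  have hbound : AqRConst q (fun x => u x * (maxOp h x).toReal ^ (1 - q)) ≤
      C * A1Const u ^ (1 / q) := by
    rw [← ENNReal.mul_rpow_of_nonneg _ _ (by positivity)]
    exact AqRConst_le_of_forall (by linarith) fun c r hr E hE hEQ hE0 =>
      wMeasure_cube_le hq (hu_pos.mono fun _ hx => hx.le) (ae_maxOp_le_A1Const hA1) hA1.ne hMh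
        hr hE hEQ hE0
  exact ⟨hbound.trans_lt (ENNReal.mul_lt_top hC (ENNReal.rpow_lt_top_of_nonneg (by positivity)
    hA1.ne)), hbound⟩
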